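/- arXiv:2509.07166 — 3 statements merged into one kernel-verified Lean document; each statement's English description precedes it below -/
import Mathlib

section
/- Merge move log marginal likelihood ratio: let ξ_L and ξ_R be disjoint finite index sets and ξ* = ξ_L ∪ ξ_R their merged node, and assume H(ξ_L)+1/σ_μ² > 0, H(ξ_R)+1/σ_μ² > 0, and H(ξ*)+1/σ_μ² > 0. Then log m̂(ξ*) − log m̂(ξ_L) − log m̂(ξ_R) = (1/2)·[ (J(ξ*)+μ0/σ_μ²)²/(H(ξ*)+1/σ_μ²) − (J(ξ_L)+μ0/σ_μ²)²/(H(ξ_L)+1/σ_μ²) − (J(ξ_R)+μ0/σ_μ²)²/(H(ξ_R)+1/σ_μ²) + μ0²/σ_μ² ] − (1/2)·[ log(H(ξ*)+1/σ_μ²) − log(H(ξ_L)+1/σ_μ²) − log(H(ξ_R)+1/σ_μ²) ] + log σ_μ. -/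
open Real

/-- Merge move log marginal likelihood ratio for GS-BART. -/
theorem merge_move_log_marginal_likelihood_ratio
    {ι : Type*} [DecidableEq ι] (ℓ a b c : ι → ℝ) (μ0 σμ : ℝ) (hσμ : 0 < σμ)
    (J H : Finset ι → ℝ)
    (hJ : ∀ S : Finset ι, J S = ∑ i ∈ S, (a i - c i * b i))
    (hH : ∀ S : Finset ι, H S = -∑ i ∈ S, b i)
    (logm : Finset ι → ℝ)
    (hlogm : ∀ S : Finset ι, 0 < H S + 1 / σμ ^ 2 →
      logm S = -(μ0 ^ 2) / (2 * σμ ^ 2)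
        + ∑ i ∈ S, (ℓ i - c i * a i + c i ^ 2 * b i / 2)
        + (J S + μ0 / σμ ^ 2) ^ 2 / (2 * (H S + 1 / σμ ^ 2))
        - Real.log (σμ * Real.sqrt (H S + 1 / σμ ^ 2)))
    (ξL ξR : Finset ι) (hdisj : Disjoint ξL ξR)
    (hL : 0 < H ξL + 1 / σμ ^ 2) (hR : 0 < H ξR + 1 / σμ ^ 2)
    (hU : 0 < H (ξL ∪ ξR) + 1 / σμ ^ 2) :
    logm (ξL ∪ ξR) - logm ξL - logm ξR
      = (1 / 2) * ((J (ξL ∪ ξR) + μ0 / σμ ^ 2) ^ 2 / (H (ξL ∪ ξR) + 1 / σμ ^ 2)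
            - (J ξL + μ0 / σμ ^ 2) ^ 2 / (H ξL + 1 / σμ ^ 2)
            - (J ξR + μ0 / σμ ^ 2) ^ 2 / (H ξR + 1 / σμ ^ 2)
            + μ0 ^ 2 / σμ ^ 2)
        - (1 / 2) * (Real.log (H (ξL ∪ ξR) + 1 / σμ ^ 2)
            - Real.log (H ξL + 1 / σμ ^ 2) - Real.log (H ξR + 1 / σμ ^ 2))
        + Real.log σμ := by

  have key : ∀ S : Finset ι, 0 < H S + 1 / σμ ^ 2 →
      Real.log (σμ * Real.sqrt (H S + 1 / σμ ^ 2))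
        = Real.log σμ + (1/2) * Real.log (H S + 1 / σμ ^ 2) := by
    intro S hS
    rw [Real.log_mul (ne_of_gt hσμ) (ne_of_gt (Real.sqrt_pos.mpr hS)),
      Real.log_sqrt hS.le]
    ring
  have hsum : (∑ i ∈ ξL ∪ ξR, (ℓ i - c i * a i + c i ^ 2 * b i / 2))
      = (∑ i ∈ ξL, (ℓ i - c i * a i + c i ^ 2 * b i / 2))
        + (∑ i ∈ ξR, (ℓ i - c i * a i + c i ^ 2 * b i / 2)) :=
    Finset.sum_union hdisj
  have h2x : ∀ A x : ℝ, A / (2 * x) = 1 / 2 * (A / x) := by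
    intro A x; rw [mul_comm 2 x, div_mul_eq_div_div]; ring
  rw [hlogm _ hU, hlogm _ hL, hlogm _ hR, key _ hU, key _ hL, key _ hR, hsum]
  simp only [h2x]
  ring
end

section
/- Detailed balance of the informed proposal weights: for all states x, y ∈ 𝒯, p(x)·η(y|x) = p(y)·η(x|y), where η(y|x) = q(y|x)·h( p(y)q(x|y) / (p(x)q(y|x)) ) if q(y|x) > 0 and η(y|x) = 0 otherwise. -/
/-! With `a = p x * q(y|x)` and `b = p y * q(x|y)` the weight `p x * η(y|x)` is `a * h (b / a)`,
which the balancing identity at `t = b / a` makes symmetric in `a` and `b`. -/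

theorem mul_apply_div_comm_of_balancing {h : ℝ → ℝ}
    (hbal : ∀ t : ℝ, 0 < t → h t = t * h (1 / t)) {a b : ℝ} (ha : 0 < a) (hb : 0 < b) :
    a * h (b / a) = b * h (a / b) := by
  rw [hbal (b / a) (div_pos hb ha), one_div_div, ← mul_assoc, mul_div_cancel₀ b ha.ne']

theorem informed_proposal_detailed_balance_general
    {𝒯 : Type*}
    (p : 𝒯 → ℝ) (hp : ∀ x, 0 < p x)
    (q : 𝒯 → 𝒯 → ℝ)
    (hqsym : ∀ x y, 0 < q x y ↔ 0 < q y x)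
    (h : ℝ → ℝ) (hbal : ∀ t : ℝ, 0 < t → h t = t * h (1 / t))
    (η : 𝒯 → 𝒯 → ℝ)
    (hη : ∀ x y, η x y =
      if 0 < q x y then q x y * h (p y * q y x / (p x * q x y)) else 0) :
    ∀ x y : 𝒯, p x * η x y = p y * η y x := by
  intro x y
  rw [hη x y, hη y x]
  by_cases hxy : 0 < q x y
  · have hyx : 0 < q y x := (hqsym x y).mp hxy
    rw [if_pos hxy, if_pos hyx, ← mul_assoc, ← mul_assoc]
    exact mul_apply_div_comm_of_balancing hbal (mul_pos (hp x) hxy) (mul_pos (hp y) hyx)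
  · rw [if_neg hxy, if_neg (mt (hqsym x y).mpr hxy), mul_zero, mul_zero]

/-- Detailed balance of the informed proposal weights `η` with respect to the target `p`.
Here `q x y` denotes the uninformed proposal probability `q(y|x)` and
`η x y` denotes the informed weight `η(y|x)`. -/
theorem informed_proposal_detailed_balance
    {𝒯 : Type*} [Fintype 𝒯]
    (p : 𝒯 → ℝ) (hp : ∀ x, 0 < p x)
    (q : 𝒯 → 𝒯 → ℝ) (hq0 : ∀ x y, 0 ≤ q x y)
    (hqsym : ∀ x y, 0 < q x y ↔ 0 < q y x)
    (h : ℝ → ℝ) (hbal : ∀ t : ℝ, 0 < t → h t = t * h (1 / t))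
    (η : 𝒯 → 𝒯 → ℝ)
    (hη : ∀ x y, η x y =
      if 0 < q x y then q x y * h (p y * q y x / (p x * q x y)) else 0) :
    ∀ x y : 𝒯, p x * η x y = p y * η y x :=
  informed_proposal_detailed_balance_general p hp q hqsym h hbal η hη
end

section
/- Reversibility of the rejection-free informed chain: assume additionally that h(t) > 0 for all t > 0 and that every state x has a nonempty neighborhood, so that Z(x) = Σ_{y∈𝒯} η(y|x) > 0. Define the transition matrix P(x,y) = η(y|x)/Z(x). Then P satisfies detailed balance with respect to the Z-tilted distribution: for all x, y ∈ 𝒯, (p(x)·Z(x))·P(x,y) = (p(y)·Z(y))·P(y,x); hence P is reversible with respect to p̃(x) ∝ p(x)·Z(x). -/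
/-- Reversibility of the rejection-free informed chain `P(x,y) = η(y|x)/Z(x)` with respect to
the `Z`-tilted distribution `p̃(x) ∝ p(x)·Z(x)`.  Here `q x y` denotes `q(y|x)` and
`η x y` denotes `η(y|x)`. -/
theorem informed_chain_reversible_wrt_tilted
    {𝒯 : Type*} [Fintype 𝒯]
    (p : 𝒯 → ℝ) (hp : ∀ x, 0 < p x)
    (q : 𝒯 → 𝒯 → ℝ) (hq0 : ∀ x y, 0 ≤ q x y)
    (hqsym : ∀ x y, 0 < q x y ↔ 0 < q y x)
    (h : ℝ → ℝ) (hbal : ∀ t : ℝ, 0 < t → h t = t * h (1 / t))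
    (hhpos : ∀ t : ℝ, 0 < t → 0 < h t)
    (η : 𝒯 → 𝒯 → ℝ)
    (hη : ∀ x y, η x y =
      if 0 < q x y then q x y * h (p y * q y x / (p x * q x y)) else 0)
    (hnbhd : ∀ x : 𝒯, ∃ y : 𝒯, 0 < q x y)
    (Z : 𝒯 → ℝ) (hZ : ∀ x, Z x = ∑ y : 𝒯, η x y)
    (P : 𝒯 → 𝒯 → ℝ) (hP : ∀ x y, P x y = η x y / Z x) :
    (∀ x : 𝒯, 0 < Z x) ∧
    (∀ x y : 𝒯, (p x * Z x) * P x y = (p y * Z y) * P y x) := by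
  have hηnn : ∀ x y, 0 ≤ η x y := by
    intro x y
    rw [hη]
    split_ifs with hq
    · have hq' : 0 < q y x := (hqsym x y).mp hq
      have ht : 0 < p y * q y x / (p x * q x y) :=
        div_pos (mul_pos (hp y) hq') (mul_pos (hp x) hq)
      exact le_of_lt (mul_pos hq (hhpos _ ht))
    · exact le_refl 0
  have hZpos : ∀ x, 0 < Z x := by
    intro x
    obtain ⟨y, hy⟩ := hnbhd x
    have hq' : 0 < q y x := (hqsym x y).mp hy
    have ht : 0 < p y * q y x / (p x * q x y) :=
      div_pos (mul_pos (hp y) hq') (mul_pos (hp x) hy)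
    have hηpos : 0 < η x y := by
      rw [hη]; rw [if_pos hy]; exact mul_pos hy (hhpos _ ht)
    rw [hZ]
    exact Finset.sum_pos' (fun z _ => hηnn x z) ⟨y, Finset.mem_univ y, hηpos⟩
  have key : ∀ x y, p x * η x y = p y * η y x := by
    intro x y
    rw [hη x y, hη y x]
    by_cases hq : 0 < q x y
    · have hq' : 0 < q y x := (hqsym x y).mp hq
      rw [if_pos hq, if_pos hq']
      set t := p y * q y x / (p x * q x y) with hT
      have ht : 0 < t := div_pos (mul_pos (hp y) hq') (mul_pos (hp x) hq)
      have hinv : 1 / t = p x * q x y / (p y * q y x) := by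
        rw [hT, one_div_div]
      have hc : (p x * q x y) * t = p y * q y x := by
        rw [hT, mul_div_assoc', mul_div_cancel_left₀ _ (mul_pos (hp x) hq).ne']
      rw [hbal t ht, hinv]
      linear_combination (h (p x * q x y / (p y * q y x))) * hc
    · have hq' : ¬ 0 < q y x := fun h' => hq ((hqsym y x).mp h')
      rw [if_neg hq, if_neg hq']
      ring
  refine ⟨hZpos, fun x y => ?_⟩
  rw [hP x y, hP y x]
  have hx : p x * Z x * (η x y / Z x) = p x * η x y := by
    field_simp [(hZpos x).ne']
  have hy : p y * Z y * (η y x / Z y) = p y * η y x := by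
    field_simp [(hZpos y).ne']
  rw [hx, hy]; exact key x y
end
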